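/- arXiv:math/0510207 — 2 statements merged into one kernel-verified Lean document; each statement's English description precedes it below -/
import Mathlib

section
/- Every 3-dimensional complex Lie algebra whose derived subalgebra is all of the algebra (i.e., the bracket map Λ²V → V is surjective) is isomorphic to sl(2, ℂ). -/
open Module Polynomial

attribute [local instance 100] LieRing.ofAssociativeRing

namespace Sl2Proof


noncomputable abbrev sl2 : LieSubalgebra ℂ (Matrix (Fin 2) (Fin 2) ℂ) :=
  LieAlgebra.SpecialLinear.sl (Fin 2) ℂ

lemma mem_sl2 {A : Matrix (Fin 2) (Fin 2) ℂ} (h : A 0 0 + A 1 1 = 0) : A ∈ sl2 := by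
  show A ∈ LinearMap.ker (Matrix.traceLinearMap _ _ _)
  simpa [Matrix.trace_fin_two] using h

lemma sl2_trace {A : Matrix (Fin 2) (Fin 2) ℂ} (h : A ∈ sl2) : A 0 0 + A 1 1 = 0 := by
  have : A ∈ LinearMap.ker (Matrix.traceLinearMap _ _ _) := h
  simpa [Matrix.trace_fin_two] using this

noncomputable def H : sl2 := ⟨!![1, 0; 0, -1], mem_sl2 (by norm_num)⟩
noncomputable def E : sl2 := ⟨!![0, 1; 0, 0], mem_sl2 (by norm_num)⟩
noncomputable def F : sl2 := ⟨!![0, 0; 1, 0], mem_sl2 (by norm_num)⟩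

lemma lie_HE : ⁅H, E⁆ = (2 : ℂ) • E := by
  apply Subtype.ext
  show H.val * E.val - E.val * H.val = (2:ℂ) • E.val
  ext i j
  fin_cases i <;> fin_cases j <;>
    norm_num [H, E, Matrix.mul_apply, Fin.sum_univ_two]

lemma lie_HF : ⁅H, F⁆ = (-2 : ℂ) • F := by
  apply Subtype.ext
  show H.val * F.val - F.val * H.val = (-2:ℂ) • F.val
  ext i j
  fin_cases i <;> fin_cases j <;>
    norm_num [H, F, Matrix.mul_apply, Fin.sum_univ_two]

lemma lie_EF : ⁅E, F⁆ = H := by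
  apply Subtype.ext
  show E.val * F.val - F.val * E.val = H.val
  ext i j
  fin_cases i <;> fin_cases j <;>
    simp [H, E, F, Matrix.mul_apply, Fin.sum_univ_two]



variable {L : Type} [LieRing L] [LieAlgebra ℂ L] [FiniteDimensional ℂ L]

lemma trace_ad_zero (hd : (⁅(⊤ : LieIdeal ℂ L), (⊤ : LieIdeal ℂ L)⁆ : LieIdeal ℂ L) = ⊤)
    (x : L) : LinearMap.trace ℂ L (LieAlgebra.ad ℂ L x) = 0 := by
  set φ : L →ₗ[ℂ] ℂ :=
    (LinearMap.trace ℂ L).comp (LieAlgebra.ad ℂ L : L →ₗ⁅ℂ⁆ Module.End ℂ L).toLinearMap with hφ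
  suffices h : x ∈ LinearMap.ker φ by simpa [φ] using h
  have hx : x ∈ (⁅(⊤ : LieIdeal ℂ L), (⊤ : LieIdeal ℂ L)⁆ : LieIdeal ℂ L) := by
    rw [hd]; exact trivial
  rw [← LieSubmodule.mem_toSubmodule, LieSubmodule.lieIdeal_oper_eq_linear_span'] at hx
  refine Submodule.span_le.mpr ?_ hx
  rintro _ ⟨a, -, b, -, rfl⟩
  simp only [SetLike.mem_coe, LinearMap.mem_ker, φ, LinearMap.comp_apply, LieHom.coe_toLinearMap,
    LieHom.map_lie]
  rw [Ring.lie_def, map_sub, LinearMap.trace_mul_comm, sub_self]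

lemma exists_nonzero_eigen (A : Module.End ℂ L) (hA : ¬ IsNilpotent A) :
    ∃ α : ℂ, α ≠ 0 ∧ ∃ y : L, y ≠ 0 ∧ A y = α • y := by
  have hint : IsIntegral ℂ A := IsIntegral.of_finite ℂ A
  have hmon : (minpoly ℂ A).Monic := minpoly.monic hint
  have hsplit : (minpoly ℂ A).Splits := IsAlgClosed.splits _
  by_cases hroots : ∃ α ∈ (minpoly ℂ A).roots, α ≠ 0
  · obtain ⟨α, hmem, hα⟩ := hroots
    have hroot : (minpoly ℂ A).IsRoot α := (mem_roots (hmon.ne_zero)).mp hmem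
    have hev : A.HasEigenvalue α := Module.End.hasEigenvalue_of_isRoot hroot
    obtain ⟨y, hy⟩ := hev.exists_hasEigenvector
    exact ⟨α, hα, y, hy.2, hy.apply_eq_smul⟩
  · exfalso
    push_neg at hroots
    have hprod := hsplit.eq_prod_roots_of_monic hmon
    have hmap : (minpoly ℂ A).roots.map (fun a => X - C a)
        = (minpoly ℂ A).roots.map (fun _ => (X : ℂ[X])) :=
      Multiset.map_congr rfl (fun a ha => by rw [hroots a ha, map_zero, sub_zero])
    rw [hmap, Multiset.map_const', Multiset.prod_replicate] at hprod
    apply hA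
    refine ⟨Multiset.card (minpoly ℂ A).roots, ?_⟩
    have := minpoly.aeval ℂ A
    rw [hprod] at this
    simpa using this


end Sl2Proof

set_option maxHeartbeats 1000000 in
open Sl2Proof in
/-- Every 3-dimensional complex Lie algebra equal to its own derived subalgebra
is isomorphic to `sl(2,ℂ)`. -/
theorem iso_sl2_of_derived_eq_top
    (L : Type) [LieRing L] [LieAlgebra ℂ L] [FiniteDimensional ℂ L]
    (h3 : Module.finrank ℂ L = 3)
    (hd : (⁅(⊤ : LieIdeal ℂ L), (⊤ : LieIdeal ℂ L)⁆ : LieIdeal ℂ L) = ⊤) :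
    Nonempty (L ≃ₗ⁅ℂ⁆ ↥(LieAlgebra.SpecialLinear.sl (Fin 2) ℂ)) := by
  have hnontriv : Nontrivial L := by
    apply Module.nontrivial_of_finrank_pos (R := ℂ); omega
  -- step 1: some ad x is not nilpotent
  have hex : ∃ x : L, ¬ IsNilpotent (LieAlgebra.ad ℂ L x) := by
    by_contra hcon
    push_neg at hcon
    haveI hnil : LieRing.IsNilpotent L := by
      rw [LieAlgebra.isNilpotent_iff_forall (R := ℂ)]
      intro x; simpa using hcon x
    obtain ⟨k, hk⟩ := LieModule.IsNilpotent.nilpotent ℂ L L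
    have htop : ∀ k, LieModule.lowerCentralSeries ℂ L L k = ⊤ := by
      intro k
      induction k with
      | zero => exact LieModule.lowerCentralSeries_zero ℂ L L
      | succ n ih => rw [LieModule.lowerCentralSeries_succ, ih]; exact hd
    rw [htop k] at hk
    obtain ⟨u, hu⟩ := exists_ne (0 : L)
    have : u ∈ (⊤ : LieSubmodule ℂ L L) := trivial
    rw [hk] at this
    exact hu (by simpa using this)
  obtain ⟨x, hx⟩ := hex
  set A := LieAlgebra.ad ℂ L x with hA
  have hx0 : x ≠ 0 := by rintro rfl; exact hx (by simp [hA])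
  obtain ⟨α, hα, y, hy0, hAy⟩ := exists_nonzero_eigen A hx
  have hAx : A x = 0 := by simp [hA]
  -- x, y linearly independent
  have li2 : LinearIndependent ℂ ![x, y] := by
    rw [LinearIndependent.pair_iff]
    intro s t hst
    have h1 : t • y = 0 := by
      have := congrArg A hst
      rw [map_add, map_smul, map_smul, hAx, hAy, smul_zero, map_zero, zero_add,
        smul_smul] at this
      have ht : t * α = 0 := by
        rcases smul_eq_zero.mp this with h | h
        · exact h
        · exact absurd h hy0
      rcases mul_eq_zero.mp ht with h | h
      · rw [h, zero_smul]
      · exact absurd h hα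
    have ht : t = 0 := by
      rcases smul_eq_zero.mp h1 with h | h
      · exact h
      · exact absurd h hy0
    refine ⟨?_, ht⟩
    rw [ht, zero_smul, add_zero] at hst
    rcases smul_eq_zero.mp hst with h | h
    · exact h
    · exact absurd h hx0
  -- find w outside span {x, y}
  have hspan : ∃ w : L, w ∉ Submodule.span ℂ (Set.range ![x, y]) := by
    by_contra hcon
    push_neg at hcon
    have heq : Submodule.span ℂ (Set.range ![x, y]) = ⊤ := Submodule.eq_top_iff'.mpr hcon
    have hle := finrank_le_of_span_eq_top heq
    rw [h3] at hle
    simp at hle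
  obtain ⟨w, hw⟩ := hspan
  have li3 : LinearIndependent ℂ ![x, y, w] := by
    have : ![x, y, w] = Fin.snoc ![x, y] w := by
      funext i; fin_cases i <;> rfl
    rw [this, linearIndependent_fin_snoc]
    exact ⟨li2, hw⟩
  -- basis (x, y, w)
  have hcard : Fintype.card (Fin 3) = finrank ℂ L := by simp [h3]
  set b : Basis (Fin 3) ℂ L := basisOfLinearIndependentOfCardEqFinrank li3 hcard with hbdef
  have hb : ⇑b = ![x, y, w] := coe_basisOfLinearIndependentOfCardEqFinrank li3 hcard
  have hb0 : b 0 = x := by rw [hb]; rfl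
  have hb1 : b 1 = y := by rw [hb]; rfl
  have hb2 : b 2 = w := by rw [hb]; rfl
  set a1 : ℂ := b.repr (A w) 0 with ha1
  set a2 : ℂ := b.repr (A w) 1 with ha2
  set c : ℂ := b.repr (A w) 2 with hc
  have hAw : A w = a1 • x + a2 • y + c • w := by
    have h := b.sum_repr (A w)
    rw [Fin.sum_univ_three, hb0, hb1, hb2] at h
    rw [← h, ha1, ha2, hc]
  -- trace of A is zero, hence c = -α
  have htr : c = -α := by
    have h0 : LinearMap.trace ℂ L A = 0 := trace_ad_zero hd x
    rw [LinearMap.trace_eq_matrix_trace ℂ b A, Matrix.trace_fin_three] at h0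
    have d00 : LinearMap.toMatrix b b A 0 0 = 0 := by
      rw [LinearMap.toMatrix_apply, hb0, hAx]; simp
    have d11 : LinearMap.toMatrix b b A 1 1 = α := by
      rw [LinearMap.toMatrix_apply, hb1, hAy, map_smul, ← hb1, Basis.repr_self]
      simp
    have d22 : LinearMap.toMatrix b b A 2 2 = c := by
      rw [LinearMap.toMatrix_apply, hb2]
    rw [d00, d11, d22] at h0
    linear_combination h0
  -- construct z, an eigenvector for -α
  set z : L := w - (a1 / α) • x - (a2 / (2 * α)) • y with hz
  have hAz : A z = -α • z := by
    rw [hz]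
    simp only [map_sub, map_smul, hAx, hAy, hAw, htr, smul_zero]
    match_scalars <;> field_simp <;> ring
  -- independence of x, y, z
  have li3' : LinearIndependent ℂ ![x, y, z] := by
    rw [Fintype.linearIndependent_iff]
    intro g hg
    rw [Fin.sum_univ_three] at hg
    simp only [Matrix.cons_val_zero, Matrix.cons_val_one, Matrix.head_cons,
      Matrix.cons_val_two, Matrix.tail_cons] at hg
    have hg' : (g 0 - g 2 * (a1 / α)) • x + (g 1 - g 2 * (a2 / (2 * α))) • y + g 2 • w = 0 := by
      rw [← hg, hz]
      module
    have hli := Fintype.linearIndependent_iff.mp li3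
    have h := hli ![g 0 - g 2 * (a1 / α), g 1 - g 2 * (a2 / (2 * α)), g 2] (by
      rw [Fin.sum_univ_three]
      simpa using hg')
    have h2 : g 2 = 0 := by simpa using h 2
    have h0 : g 0 = 0 := by have := h 0; simp [h2] at this; simpa [h2] using this
    have h1 : g 1 = 0 := by have := h 1; simp [h2] at this; simpa [h2] using this
    intro i; fin_cases i <;> assumption
  have hxy : ⁅x, y⁆ = α • y := by rw [← hAy]; simp [hA]
  have hxz : ⁅x, z⁆ = -α • z := by rw [← hAz]; simp [hA]
  -- basis (x, y, z)
  set b2 : Basis (Fin 3) ℂ L := basisOfLinearIndependentOfCardEqFinrank li3' hcard with hb2def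
  have hb2 : ⇑b2 = ![x, y, z] := coe_basisOfLinearIndependentOfCardEqFinrank li3' hcard
  have hb2_0 : b2 0 = x := by rw [hb2]; rfl
  have hb2_1 : b2 1 = y := by rw [hb2]; rfl
  have hb2_2 : b2 2 = z := by rw [hb2]; rfl
  -- the bracket ⁅y, z⁆ is a multiple of x
  have hyz0 : A ⁅y, z⁆ = 0 := by
    rw [hA]
    simp only [LieAlgebra.ad_apply]
    rw [leibniz_lie x y z, hxy, hxz, smul_lie, lie_smul]
    module
  set p : ℂ := b2.repr ⁅y, z⁆ 0 with hp
  set q : ℂ := b2.repr ⁅y, z⁆ 1 with hq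
  set r : ℂ := b2.repr ⁅y, z⁆ 2 with hr
  have hyzrep : ⁅y, z⁆ = p • x + q • y + r • z := by
    have h := b2.sum_repr ⁅y, z⁆
    rw [Fin.sum_univ_three, hb2_0, hb2_1, hb2_2] at h
    rw [← h, hp, hq, hr]
  have hqr : q = 0 ∧ r = 0 := by
    have h := congrArg A hyzrep
    rw [hyz0, map_add, map_add, map_smul, map_smul, map_smul, hAx, hAy, hAz, smul_zero,
      zero_add] at h
    have hli := Fintype.linearIndependent_iff.mp li3'
    have h' := hli ![0, q * α, -(r * α)] (by
      rw [Fin.sum_univ_three]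
      simp only [Matrix.cons_val_zero, Matrix.cons_val_one, Matrix.head_cons,
        Matrix.cons_val_two, Matrix.tail_cons]
      rw [zero_smul, zero_add]
      rw [smul_smul, smul_smul] at h
      rw [← h.symm]
      module)
    constructor
    · have := h' 1; simp at this
      rcases this with h | h
      · exact h
      · exact absurd h hα
    · have := h' 2; simp at this
      rcases this with h | h
      · exact h
      · exact absurd h hα
  have hyzp : ⁅y, z⁆ = p • x := by
    rw [hyzrep, hqr.1, hqr.2, zero_smul, zero_smul, add_zero, add_zero]
  -- p ≠ 0, else the derived algebra is contained in span {y, z}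
  have hp0 : p ≠ 0 := by
    intro hpz
    have hyzzero : ⁅y, z⁆ = (0 : L) := by rw [hyzp, hpz, zero_smul]
    set S : Submodule ℂ L := Submodule.span ℂ ({y, z} : Set L) with hS
    have hyS : y ∈ S := Submodule.subset_span (by simp)
    have hzS : z ∈ S := Submodule.subset_span (by simp)
    have hxxS : ⁅x, x⁆ ∈ S := by simp
    have hyyS : ⁅y, y⁆ ∈ S := by simp
    have hzzS : ⁅z, z⁆ ∈ S := by simp
    have hxyS : ⁅x, y⁆ ∈ S := by rw [hxy]; exact S.smul_mem _ hyS
    have hyxS : ⁅y, x⁆ ∈ S := by rw [← lie_skew]; exact S.neg_mem hxyS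
    have hxzS : ⁅x, z⁆ ∈ S := by rw [hxz]; exact S.smul_mem _ hzS
    have hzxS : ⁅z, x⁆ ∈ S := by rw [← lie_skew]; exact S.neg_mem hxzS
    have hyzS : ⁅y, z⁆ ∈ S := by rw [hyzzero]; simp
    have hzyS : ⁅z, y⁆ ∈ S := by rw [← lie_skew]; exact S.neg_mem hyzS
    have hmem : ∀ i j : Fin 3, ⁅b2 i, b2 j⁆ ∈ S := by
      intro i j
      fin_cases i <;> fin_cases j <;> rw [hb2] <;> assumption
    have spanb : ∀ u : L, u ∈ Submodule.span ℂ (Set.range ⇑b2) := by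
      intro u; rw [Basis.span_eq]; trivial
    have hbr : ∀ u v : L, ⁅u, v⁆ ∈ S := by
      intro u v
      have hu := spanb u
      have hv := spanb v
      induction hu using Submodule.span_induction with
      | mem a ha =>
        induction hv using Submodule.span_induction with
        | mem a' ha' =>
          obtain ⟨i, rfl⟩ := ha
          obtain ⟨j, rfl⟩ := ha'
          exact hmem i j
        | zero => simp
        | add v1 v2 _ _ h1 h2 => rw [lie_add]; exact S.add_mem h1 h2
        | smul t v1 _ h1 => rw [lie_smul]; exact S.smul_mem t h1
      | zero => simp
      | add u1 u2 _ _ h1 h2 => rw [add_lie]; exact S.add_mem h1 h2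
      | smul t u1 _ h1 => rw [smul_lie]; exact S.smul_mem t h1
    have hxS : x ∈ S := by
      have hx2 : x ∈ (⁅(⊤ : LieIdeal ℂ L), (⊤ : LieIdeal ℂ L)⁆ : LieIdeal ℂ L) := by
        rw [hd]; trivial
      rw [← LieSubmodule.mem_toSubmodule, LieSubmodule.lieIdeal_oper_eq_linear_span'] at hx2
      refine Submodule.span_le.mpr ?_ hx2
      rintro _ ⟨u, -, v, -, rfl⟩
      exact hbr u v
    obtain ⟨s, t, hst⟩ := Submodule.mem_span_pair.mp hxS
    have hli := Fintype.linearIndependent_iff.mp li3'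
    have h' := hli ![-1, s, t] (by
      rw [Fin.sum_univ_three]
      simp only [Matrix.cons_val_zero, Matrix.cons_val_one, Matrix.head_cons,
        Matrix.cons_val_two, Matrix.tail_cons]
      rw [← hst]; module)
    have := h' 0
    simp at this
  clear_value z
  -- the sl2 triple in L
  set eh : L := (2 / α) • x with heh
  set ee : L := y with hee
  set ef : L := (2 / (α * p)) • z with hef
  clear_value eh ee ef
  have Rhe : ⁅eh, ee⁆ = (2 : ℂ) • ee := by
    rw [heh, smul_lie, hxy, smul_smul, div_mul_cancel₀ _ hα]
  have Rhf : ⁅eh, ef⁆ = (-2 : ℂ) • ef := by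
    rw [heh, hef, smul_lie, lie_smul, hxz]
    match_scalars <;> field_simp <;> ring
  have Ref : ⁅ee, ef⁆ = eh := by
    rw [hef, heh, lie_smul, hyzp, smul_smul]
    congr 1
    field_simp
  -- (eh, ee, ef) is a basis of L
  have li3'' : LinearIndependent ℂ ![eh, ee, ef] := by
    rw [Fintype.linearIndependent_iff]
    intro g hg
    rw [Fin.sum_univ_three] at hg
    simp only [Matrix.cons_val_zero, Matrix.cons_val_one, Matrix.head_cons,
      Matrix.cons_val_two, Matrix.tail_cons] at hg
    have hli := Fintype.linearIndependent_iff.mp li3'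
    have h' := hli ![g 0 * (2 / α), g 1, g 2 * (2 / (α * p))] (by
      rw [Fin.sum_univ_three]
      simp only [Matrix.cons_val_zero, Matrix.cons_val_one, Matrix.head_cons,
        Matrix.cons_val_two, Matrix.tail_cons]
      rw [← hg, heh, hee, hef]
      module)
    have h2α : (2 : ℂ) / α ≠ 0 := by
      apply div_ne_zero _ hα; norm_num
    have h2αp : (2 : ℂ) / (α * p) ≠ 0 := by
      apply div_ne_zero _ (mul_ne_zero hα hp0); norm_num
    intro i
    fin_cases i
    · have := h' 0; simp at this
      rcases this with h | h
      · exact h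
      · exact absurd h hα
    · have := h' 1; simpa using this
    · have := h' 2; simp at this
      rcases this with h | h
      · exact h
      · rcases h with h | h
        · exact absurd h hα
        · exact absurd h hp0
  set b3 : Basis (Fin 3) ℂ L := basisOfLinearIndependentOfCardEqFinrank li3'' hcard with hb3def
  have hb3 : ⇑b3 = ![eh, ee, ef] := coe_basisOfLinearIndependentOfCardEqFinrank li3'' hcard
  have hb3_0 : b3 0 = eh := by rw [hb3]; rfl
  have hb3_1 : b3 1 = ee := by rw [hb3]; rfl
  have hb3_2 : b3 2 = ef := by rw [hb3]; rfl
  -- the linear maps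
  set Φ : L →ₗ[ℂ] sl2 := b3.constr ℂ ![H, E, F] with hΦ
  have hΦ0 : Φ eh = H := by rw [hΦ, ← hb3_0, Basis.constr_basis]; rfl
  have hΦ1 : Φ ee = E := by rw [hΦ, ← hb3_1, Basis.constr_basis]; rfl
  have hΦ2 : Φ ef = F := by rw [hΦ, ← hb3_2, Basis.constr_basis]; rfl
  set Ψ : sl2 →ₗ[ℂ] L :=
    { toFun := fun M => M.val 0 0 • eh + M.val 0 1 • ee + M.val 1 0 • ef
      map_add' := by
        intro M N
        show (M.val 0 0 + N.val 0 0) • eh + (M.val 0 1 + N.val 0 1) • ee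
            + (M.val 1 0 + N.val 1 0) • ef
          = (M.val 0 0 • eh + M.val 0 1 • ee + M.val 1 0 • ef)
            + (N.val 0 0 • eh + N.val 0 1 • ee + N.val 1 0 • ef)
        module
      map_smul' := by
        intro t M
        show (t * M.val 0 0) • eh + (t * M.val 0 1) • ee + (t * M.val 1 0) • ef
          = t • (M.val 0 0 • eh + M.val 0 1 • ee + M.val 1 0 • ef)
        module } with hΨ
  have hΨH : Ψ H = eh := by
    rw [hΨ]
    show ((1:ℂ)) • eh + (0:ℂ) • ee + (0:ℂ) • ef = eh
    module
  have hΨE : Ψ E = ee := by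
    rw [hΨ]
    show ((0:ℂ)) • eh + (1:ℂ) • ee + (0:ℂ) • ef = ee
    module
  have hΨF : Ψ F = ef := by
    rw [hΨ]
    show ((0:ℂ)) • eh + (0:ℂ) • ee + (1:ℂ) • ef = ef
    module
  have hleft : ∀ u : L, Ψ (Φ u) = u := by
    have : Ψ.comp Φ = LinearMap.id := by
      apply b3.ext
      intro i
      fin_cases i
      · simp only [LinearMap.comp_apply, LinearMap.id_apply]
        rw [hb3]
        show Ψ (Φ eh) = eh
        rw [hΦ0, hΨH]
      · simp only [LinearMap.comp_apply, LinearMap.id_apply]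
        rw [hb3]
        show Ψ (Φ ee) = ee
        rw [hΦ1, hΨE]
      · simp only [LinearMap.comp_apply, LinearMap.id_apply]
        rw [hb3]
        show Ψ (Φ ef) = ef
        rw [hΦ2, hΨF]
    intro u
    have := congrArg (fun f => f u) this
    simpa using this
  have hright : ∀ M : sl2, Φ (Ψ M) = M := by
    intro M
    have hM : Ψ M = M.val 0 0 • eh + M.val 0 1 • ee + M.val 1 0 • ef := rfl
    rw [hM, map_add, map_add, map_smul, map_smul, map_smul, hΦ0, hΦ1, hΦ2]
    have htr2 : M.val 1 1 = -(M.val 0 0) := by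
      have := sl2_trace M.2
      linear_combination this
    apply Subtype.ext
    show M.val 0 0 • H.val + M.val 0 1 • E.val + M.val 1 0 • F.val = M.val
    ext i j
    fin_cases i <;> fin_cases j <;>
      simp [H, E, F, htr2]
  -- Φ respects brackets
  have hkey : ∀ u v : L, Φ ⁅u, v⁆ = ⁅Φ u, Φ v⁆ := by
    set B1 : L →ₗ[ℂ] L →ₗ[ℂ] sl2 := LinearMap.mk₂ ℂ (fun u v => Φ ⁅u, v⁆)
      (fun u u' v => by simp only [add_lie, map_add])
      (fun t u v => by simp only [smul_lie, map_smul])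
      (fun u v v' => by simp only [lie_add, map_add])
      (fun t u v => by simp only [lie_smul, map_smul]) with hB1
    set B2 : L →ₗ[ℂ] L →ₗ[ℂ] sl2 := LinearMap.mk₂ ℂ (fun u v => ⁅Φ u, Φ v⁆)
      (fun u u' v => by simp only [map_add, add_lie])
      (fun t u v => by simp only [map_smul, smul_lie])
      (fun u v v' => by simp only [map_add, lie_add])
      (fun t u v => by simp only [map_smul, lie_smul]) with hB2
    have : B1 = B2 := by
      apply LinearMap.ext_basis b3 b3
      intro i j
      rw [hB1, hB2]
      simp only [LinearMap.mk₂_apply]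
      have skewL : ∀ u v : L, ⁅u, v⁆ = -⁅v, u⁆ := fun u v => by rw [← lie_skew u v]
      have skewS : ∀ u v : sl2, ⁅u, v⁆ = -⁅v, u⁆ := fun u v => by rw [← lie_skew u v]
      fin_cases i <;> fin_cases j <;> rw [hb3]
      · show Φ ⁅eh, eh⁆ = ⁅Φ eh, Φ eh⁆; rw [lie_self, lie_self, map_zero]
      · show Φ ⁅eh, ee⁆ = ⁅Φ eh, Φ ee⁆
        rw [Rhe, hΦ0, hΦ1, lie_HE, map_smul, hΦ1]
      · show Φ ⁅eh, ef⁆ = ⁅Φ eh, Φ ef⁆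
        rw [Rhf, hΦ0, hΦ2, lie_HF, map_smul, hΦ2]
      · show Φ ⁅ee, eh⁆ = ⁅Φ ee, Φ eh⁆
        rw [skewL ee eh, skewS (Φ ee) (Φ eh), Rhe, map_neg, map_smul, hΦ0, hΦ1, lie_HE]
      · show Φ ⁅ee, ee⁆ = ⁅Φ ee, Φ ee⁆; rw [lie_self, lie_self, map_zero]
      · show Φ ⁅ee, ef⁆ = ⁅Φ ee, Φ ef⁆
        rw [Ref, hΦ0, hΦ1, hΦ2, lie_EF]
      · show Φ ⁅ef, eh⁆ = ⁅Φ ef, Φ eh⁆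
        rw [skewL ef eh, skewS (Φ ef) (Φ eh), Rhf, map_neg, map_smul, hΦ0, hΦ2, lie_HF]
      · show Φ ⁅ef, ee⁆ = ⁅Φ ef, Φ ee⁆
        rw [skewL ef ee, skewS (Φ ef) (Φ ee), Ref, map_neg, hΦ0, hΦ1, hΦ2, lie_EF]
      · show Φ ⁅ef, ef⁆ = ⁅Φ ef, Φ ef⁆; rw [lie_self, lie_self, map_zero]
    intro u v
    have := congrArg (fun f => f u v) this
    simpa [hB1, hB2] using this
  exact ⟨{ toLinearMap := Φ
           map_lie' := fun {u v} => hkey u v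
           invFun := Ψ
           left_inv := hleft
           right_inv := hright }⟩
end

section
/- Let d₂ be the Lie algebra on ℂ³ with brackets [f1,f3] = f1, [f2,f3] = f2. Then the space of derivations of d₂ modulo inner derivations (i.e., H¹ with adjoint coefficients) has dimension 3. -/
/-- The Lie algebra `d₂` on `ℂ³`: `[f1,f3] = f1`, `[f2,f3] = f2`, other brackets zero. -/
def br (u v : Fin 3 → ℂ) : Fin 3 → ℂ :=
  fun k =>
    if k = 0 then u 0 * v 2 - u 2 * v 0
    else if k = 1 then u 1 * v 2 - u 2 * v 1
    else 0

/-- Linearity of a map `ℂ³ → ℂ³`. -/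
def IsLin (ρ : (Fin 3 → ℂ) → (Fin 3 → ℂ)) : Prop :=
  (∀ u v, ρ (u + v) = ρ u + ρ v) ∧ ∀ (s : ℂ) u, ρ (s • u) = s • ρ u

/-- The space of derivations of `d₂` (a subspace, hence equal to its span). -/
noncomputable def Der : Submodule ℂ ((Fin 3 → ℂ) → (Fin 3 → ℂ)) :=
  Submodule.span ℂ {ρ | IsLin ρ ∧ ∀ u v, ρ (br u v) = br (ρ u) v + br u (ρ v)}

/-- The space of inner derivations `ad(w) : u ↦ [u,w]`. -/
noncomputable def Inn : Submodule ℂ ((Fin 3 → ℂ) → (Fin 3 → ℂ)) :=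
  Submodule.span ℂ {ρ | ∃ w : Fin 3 → ℂ, ρ = fun u => br u w}

/-!
The basis vectors `f1, f2, f3` are the indices `0, 1, 2`. A derivation `ρ` preserves the derived
algebra `span {f1, f2}`, and comparing `f1`-components in `ρ [f1, f3] = ρ f1` shows that `ρ f3`
lies in it too; conversely every linear map into `span {f1, f2}` is a derivation. So `Der` is
6-dimensional. Since `d₂` has trivial centre, `ad` is injective and `Inn` is 3-dimensional,
leaving `6 - 3 = 3`.
-/

theorem finrank_quotient_comap_subtype {K V : Type*} [DivisionRing K] [AddCommGroup V]
    [Module K V] {M N : Submodule K V} [FiniteDimensional K M] (h : N ≤ M) :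
    Module.finrank K (M ⧸ N.comap M.subtype) = Module.finrank K M - Module.finrank K N := by
  rw [Submodule.finrank_quotient, (Submodule.comapSubtypeEquivOfLe h).finrank_eq]

theorem IsLin.apply_eq_sum {ρ : (Fin 3 → ℂ) → Fin 3 → ℂ} (hρ : IsLin ρ) (u : Fin 3 → ℂ) :
    ρ u = ∑ j, u j • ρ (Pi.single j 1) := by
  convert LinearMap.pi_apply_eq_sum_univ ⟨⟨ρ, hρ.1⟩, hρ.2⟩ u using 4 with j
  · rfl
  · exact congrArg ρ (funext fun k => by simp [Pi.single_apply, eq_comm])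

namespace D2

open Module Submodule

def IsDerivation (ρ : (Fin 3 → ℂ) → Fin 3 → ℂ) : Prop :=
  IsLin ρ ∧ ∀ u v, ρ (br u v) = br (ρ u) v + br u (ρ v)

lemma IsDerivation.apply_two {ρ : (Fin 3 → ℂ) → Fin 3 → ℂ} (hρ : IsDerivation ρ)
    (u : Fin 3 → ℂ) : ρ u 2 = 0 := by
  have hb0 : br (Pi.single 0 1) (Pi.single 2 1) = Pi.single 0 1 := by
    funext k; fin_cases k <;> simp [br]
  have hb1 : br (Pi.single 1 1) (Pi.single 2 1) = Pi.single 1 1 := by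
    funext k; fin_cases k <;> simp [br]
  have h0 := hρ.2 (Pi.single 0 1) (Pi.single 2 1)
  have h1 := hρ.2 (Pi.single 1 1) (Pi.single 2 1)
  rw [hb0] at h0
  rw [hb1] at h1
  have h02 : ρ (Pi.single 0 1) 2 = 0 := by simpa [br] using congrFun h0 2
  have h12 : ρ (Pi.single 1 1) 2 = 0 := by simpa [br] using congrFun h1 2
  have h22 : ρ (Pi.single 2 1) 2 = 0 := by simpa [br] using congrFun h0 0
  simp [IsLin.apply_eq_sum hρ.1 u, Fin.sum_univ_three, h02, h12, h22]

def derBasis (p : Fin 2 × Fin 3) : (Fin 3 → ℂ) → Fin 3 → ℂ :=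
  fun u => Pi.single p.1.castSucc (u p.2)

lemma isDerivation_derBasis (p : Fin 2 × Fin 3) : IsDerivation (derBasis p) := by
  refine ⟨⟨fun u v => ?_, fun s u => ?_⟩, fun u v => ?_⟩ <;> funext k <;>
    fin_cases p <;> fin_cases k <;> simp [derBasis, br] <;> ring

lemma IsDerivation.sum_smul_derBasis {ρ : (Fin 3 → ℂ) → Fin 3 → ℂ} (hρ : IsDerivation ρ) :
    ∑ p, ρ (Pi.single p.2 1) p.1.castSucc • derBasis p = ρ := by
  funext u k
  rw [IsLin.apply_eq_sum hρ.1 u]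
  fin_cases k <;>
    simp [derBasis, Fintype.sum_prod_type, Fin.sum_univ_three, hρ.apply_two] <;> ring

lemma linearIndependent_derBasis : LinearIndependent ℂ derBasis := by
  rw [Fintype.linearIndependent_iff]
  rintro c hc ⟨i, j⟩
  simpa [derBasis, Fintype.sum_prod_type, Pi.single_apply] using
    congrFun (congrFun hc (Pi.single j 1)) i.castSucc

lemma der_eq_span_derBasis : Der = span ℂ (Set.range derBasis) := by
  refine le_antisymm (span_le.2 fun ρ hρ => ?_) (span_le.2 ?_)
  · exact (mem_span_range_iff_exists_fun ℂ).2 ⟨_, IsDerivation.sum_smul_derBasis hρ⟩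
  · rintro _ ⟨p, rfl⟩
    exact subset_span (isDerivation_derBasis p)

lemma finrank_der : finrank ℂ Der = 6 := by
  rw [der_eq_span_derBasis, finrank_span_eq_card linearIndependent_derBasis]
  rfl

def ad : (Fin 3 → ℂ) →ₗ[ℂ] (Fin 3 → ℂ) → Fin 3 → ℂ where
  toFun w u := br u w
  map_add' v w := by funext u k; fin_cases k <;> simp [br] <;> ring
  map_smul' s w := by funext u k; fin_cases k <;> simp [br] <;> ring

lemma ad_injective : Function.Injective ad := by
  rw [← LinearMap.ker_eq_bot, LinearMap.ker_eq_bot']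
  intro w hw
  have hw2 : w 2 = 0 := by simpa [ad, br] using congrFun (congrFun hw (Pi.single 0 1)) 0
  have hf2 := congrFun (congrFun hw (Pi.single 2 1))
  funext k
  fin_cases k
  · simpa [ad, br] using hf2 0
  · simpa [ad, br] using hf2 1
  · exact hw2

lemma isDerivation_ad (w : Fin 3 → ℂ) : IsDerivation (ad w) := by
  refine ⟨⟨fun u v => ?_, fun s u => ?_⟩, fun u v => ?_⟩ <;> funext k <;>
    fin_cases k <;> simp [ad, br] <;> ring

lemma inn_eq_range_ad : Inn = LinearMap.range ad := by
  have : {ρ | ∃ w, ρ = fun u => br u w} = Set.range ad := by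
    ext ρ
    simp [ad, eq_comm]
  rw [Inn, this, ← LinearMap.coe_range, span_eq]

lemma finrank_inn : finrank ℂ Inn = 3 := by
  rw [inn_eq_range_ad, LinearMap.finrank_range_of_inj ad_injective, finrank_fin_fun]

lemma inn_le_der : Inn ≤ Der := by
  rw [inn_eq_range_ad]
  rintro _ ⟨w, rfl⟩
  exact subset_span (isDerivation_ad w)

end D2

/-- `H¹(d₂; d₂) = Der/Inn` has dimension 3. -/
theorem h1_d2_dim_three :
    Module.finrank ℂ (↥Der ⧸ Submodule.comap Der.subtype Inn) = 3 := by
  have : FiniteDimensional ℂ Der :=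
    Module.finite_of_finrank_pos (by rw [D2.finrank_der]; norm_num)
  rw [finrank_quotient_comap_subtype D2.inn_le_der, D2.finrank_der, D2.finrank_inn]
end
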